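/- arXiv:1901.10114 — 2 statements merged into one kernel-verified Lean document; each statement's English description precedes it below -/
import Mathlib

section
/- Let ω = e^{iπ/4}, S = [[1,0],[0,i]] and V = (1/√2)·[[ω, ω̄],[ω̄, ω]], both viewed as elements of GL(2,ℂ), and let π : GL(2,ℂ) → GL(2,ℂ)/Z be the quotient by the central subgroup of nonzero scalar multiples of the identity. Then the subgroup of GL(2,ℂ)/Z generated by π(S) and π(V) is finite of cardinality 24. -/
open Matrix

/-- `ω = e^{iπ/4}`. -/
noncomputable def ω : ℂ := Complex.exp (((Real.pi / 4 : ℝ) : ℂ) * Complex.I)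

/-- The phase gate `S`. -/
noncomputable def Smat : Matrix (Fin 2) (Fin 2) ℂ := !![1, 0; 0, Complex.I]

/-- The square root of NOT gate `V = (1/√2)·[[ω, ω̄],[ω̄, ω]]`. -/
noncomputable def Vmat : Matrix (Fin 2) (Fin 2) ℂ :=
  (1 / (Real.sqrt 2 : ℂ)) • !![ω, starRingEnd ℂ ω; starRingEnd ℂ ω, ω]

/-- The central subgroup `Z` of `GL(2,ℂ)` consisting of the nonzero scalar
multiples of the identity matrix. -/
noncomputable def scalarSubgroup : Subgroup (GL (Fin 2) ℂ) where
  carrier := { g | ∃ c : ℂ, c ≠ 0 ∧ (g : Matrix (Fin 2) (Fin 2) ℂ) = c • 1 }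
  one_mem' := ⟨1, one_ne_zero, by simp⟩
  mul_mem' := by
    rintro a b ⟨c, hc, ha⟩ ⟨d, hd, hb⟩
    refine ⟨c * d, mul_ne_zero hc hd, ?_⟩
    show ((a * b : GL (Fin 2) ℂ) : Matrix (Fin 2) (Fin 2) ℂ) = (c * d) • 1
    rw [Units.val_mul, ha, hb, smul_mul_assoc, mul_smul_comm, one_mul, smul_smul]
  inv_mem' := by
    rintro g ⟨c, hc, h⟩
    refine ⟨c⁻¹, inv_ne_zero hc, ?_⟩
    have h1 : c • ((g⁻¹ : GL (Fin 2) ℂ) : Matrix (Fin 2) (Fin 2) ℂ) = 1 := by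
      calc c • ((g⁻¹ : GL (Fin 2) ℂ) : Matrix (Fin 2) (Fin 2) ℂ)
          = (c • 1) * ((g⁻¹ : GL (Fin 2) ℂ) : Matrix (Fin 2) (Fin 2) ℂ) := by
            rw [smul_mul_assoc, one_mul]
        _ = (g : Matrix (Fin 2) (Fin 2) ℂ) *
              ((g⁻¹ : GL (Fin 2) ℂ) : Matrix (Fin 2) (Fin 2) ℂ) := by rw [h]
        _ = 1 := g.mul_inv
    calc ((g⁻¹ : GL (Fin 2) ℂ) : Matrix (Fin 2) (Fin 2) ℂ)
        = c⁻¹ • (c • ((g⁻¹ : GL (Fin 2) ℂ) : Matrix (Fin 2) (Fin 2) ℂ)) := by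
          rw [smul_smul, inv_mul_cancel₀ hc, one_smul]
      _ = c⁻¹ • (1 : Matrix (Fin 2) (Fin 2) ℂ) := by rw [h1]

instance : scalarSubgroup.Normal := by
  constructor
  rintro n ⟨c, hc, hn⟩ g
  refine ⟨c, hc, ?_⟩
  show ((g * n * g⁻¹ : GL (Fin 2) ℂ) : Matrix (Fin 2) (Fin 2) ℂ) = c • 1
  rw [Units.val_mul, Units.val_mul, hn, mul_smul_comm, mul_one, smul_mul_assoc,
    ← Units.val_mul, mul_inv_cancel]
  rfl

/-- `S` as an element of `GL(2,ℂ)`. -/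
noncomputable def S_GL : GL (Fin 2) ℂ :=
  Matrix.GeneralLinearGroup.mkOfDetNeZero Smat
    (by rw [Smat, Matrix.det_fin_two_of]; simp [Complex.I_ne_zero])

lemma omega_mul_omega : ω * ω = Complex.I := by
  rw [ω, ← Complex.exp_add]
  have h : ((Real.pi / 4 : ℝ) : ℂ) * Complex.I + ((Real.pi / 4 : ℝ) : ℂ) * Complex.I
      = ((Real.pi / 2 : ℝ) : ℂ) * Complex.I := by push_cast; ring
  rw [h, Complex.exp_mul_I]
  rw [← Complex.ofReal_cos, ← Complex.ofReal_sin]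
  simp [Real.cos_pi_div_two, Real.sin_pi_div_two]

lemma conj_omega_mul_conj_omega :
    starRingEnd ℂ ω * starRingEnd ℂ ω = -Complex.I := by
  rw [← _root_.map_mul, omega_mul_omega, Complex.conj_I]

lemma det_Vmat : Vmat.det = Complex.I := by
  rw [Vmat, Matrix.det_smul, Matrix.det_fin_two_of, omega_mul_omega,
    conj_omega_mul_conj_omega]
  have h2 : ((Real.sqrt 2 : ℝ) : ℂ) ^ 2 = 2 := by
    rw [← Complex.ofReal_pow, Real.sq_sqrt (by norm_num : (0:ℝ) ≤ 2)]
    norm_num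
  rw [Fintype.card_fin]
  have h3 : (1 / ((Real.sqrt 2 : ℝ) : ℂ)) ^ 2 = 1 / 2 := by
    rw [div_pow, h2]; norm_num
  rw [h3]; ring

/-- `V` as an element of `GL(2,ℂ)`. -/
noncomputable def V_GL : GL (Fin 2) ℂ :=
  Matrix.GeneralLinearGroup.mkOfDetNeZero Vmat
    (by rw [det_Vmat]; exact Complex.I_ne_zero)

/-!
Up to scalars, `S` and `V` are matrices over the Gaussian integers: `S` itself and
`V = (ω/√2) • !![1, -i; -i, 1]`, because `ω̄ = -iω`. Two invertible matrices have the same image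
in `GL(2,ℂ)/Z` iff all `2 × 2` minors of the pair vanish, which for Gaussian-integer matrices is a
finite computation. Exhibit 24 pairwise non-proportional Gaussian-integer matrices, each but the
identity proportional to an earlier one times `S` or `V`, so that their classes lie in the group.
Conversely the list is stable, up to scalars, under right multiplication by `S` and `V`, and a
finite set containing `1` and stable under right multiplication by the generators contains the
subgroup they generate: right multiplication by a product of generators permutes the finite set,
hence so does right multiplication by its inverse.
-/

namespace Subgroup

variable {G : Type*} [Group G] {s T : Set G}

theorem closure_subset_of_finite_of_mul_mem (hT : T.Finite) (h1 : 1 ∈ T)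
    (hmul : ∀ t ∈ T, ∀ g ∈ s, t * g ∈ T) : (closure s : Set G) ⊆ T := by
  suffices h : ∀ x ∈ closure s, ∀ t ∈ T, t * x ∈ T from
    fun x hx => by simpa using h x hx 1 h1
  intro x hx
  induction hx using closure_induction with
  | mem g hg => exact fun t ht => hmul t ht g hg
  | one => simp
  | mul x y _ _ hx hy => exact fun t ht => by simpa [mul_assoc] using hy _ (hx t ht)
  | inv x _ hx =>
    intro t ht
    obtain ⟨t', ht', rfl⟩ :=
      ((hT.injOn_iff_bijOn_of_mapsTo hx).mp (mul_left_injective x).injOn).surjOn ht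
    simpa using ht'

theorem mem_closure_of_forall_eq_one_or_eq_mul {ι : Type*} [Preorder ι] [WellFoundedLT ι]
    (f : ι → G) (hf : ∀ k, f k = 1 ∨ ∃ j < k, ∃ g ∈ s, f k = f j * g) (k : ι) :
    f k ∈ closure s := by
  induction k using WellFoundedLT.induction with
  | _ k ih =>
    obtain h | ⟨j, hjk, g, hg, h⟩ := hf k
    · exact h ▸ one_mem _
    · exact h ▸ mul_mem (ih j hjk) (subset_closure hg)

end Subgroup

namespace Matrix

variable {m n R : Type*}

-- Phrased through minors rather than as `∃ c, B = c • A`, so that it is decidable over `ℤ[i]`.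
def IsProportional [Mul R] (A B : Matrix m n R) : Prop :=
  ∀ i j i' j', A i j * B i' j' = A i' j' * B i j

instance [Mul R] [Fintype m] [Fintype n] [DecidableEq R] (A B : Matrix m n R) :
    Decidable (A.IsProportional B) :=
  inferInstanceAs (Decidable (∀ i j i' j', A i j * B i' j' = A i' j' * B i j))

theorem isProportional_map_iff {S F : Type*} [Mul R] [Mul S] [FunLike F R S]
    [MulHomClass F R S] {f : F} (hf : Function.Injective f) {A B : Matrix m n R} :
    (A.map f).IsProportional (B.map f) ↔ A.IsProportional B := by
  simp only [IsProportional, map_apply, ← map_mul, hf.eq_iff]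

theorem isProportional_iff_exists_smul_eq {K : Type*} [Field K] {A B : Matrix m n K}
    (hA : A ≠ 0) (hB : B ≠ 0) : A.IsProportional B ↔ ∃ c : K, c ≠ 0 ∧ B = c • A := by
  constructor
  · intro h
    obtain ⟨i₀, j₀, h₀⟩ : ∃ i j, A i j ≠ 0 := by
      by_contra! h'
      exact hA (Matrix.ext h')
    have hBA : B = (B i₀ j₀ / A i₀ j₀) • A := by
      ext i j
      rw [smul_apply, smul_eq_mul, div_mul_eq_mul_div, eq_div_iff h₀]
      linear_combination h i₀ j₀ i j
    refine ⟨_, fun hc => hB ?_, hBA⟩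
    rw [hBA, hc, zero_smul]
  · rintro ⟨c, -, rfl⟩ i j i' j'
    simp only [smul_apply]
    ring

end Matrix

theorem mk_eq_mk_iff_exists_smul_eq {a b : GL (Fin 2) ℂ} :
    (a : GL (Fin 2) ℂ ⧸ scalarSubgroup) = b ↔
      ∃ c : ℂ, c ≠ 0 ∧ (b : Matrix (Fin 2) (Fin 2) ℂ) = c • (a : Matrix (Fin 2) (Fin 2) ℂ) := by
  rw [QuotientGroup.eq]
  change (∃ c : ℂ, c ≠ 0 ∧ _) ↔ _
  refine exists_congr fun c => and_congr_right fun _ => ?_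
  rw [Units.val_mul]
  constructor
  · intro h
    rw [← one_mul (b : Matrix (Fin 2) (Fin 2) ℂ), ← a.mul_inv, mul_assoc, h, mul_smul_comm,
      mul_one]
  · intro h
    rw [h, mul_smul_comm, a.inv_mul]

theorem mk_eq_mk_iff_isProportional {a b : GL (Fin 2) ℂ} :
    (a : GL (Fin 2) ℂ ⧸ scalarSubgroup) = b ↔
      (a : Matrix (Fin 2) (Fin 2) ℂ).IsProportional b :=
  mk_eq_mk_iff_exists_smul_eq.trans
    (Matrix.isProportional_iff_exists_smul_eq a.ne_zero b.ne_zero).symm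

section GaussianMatrices

variable {A B C : Matrix (Fin 2) (Fin 2) GaussianInt}

noncomputable def gaussianToGL (A : Matrix (Fin 2) (Fin 2) GaussianInt) (hA : A.det ≠ 0) :
    GL (Fin 2) ℂ :=
  GeneralLinearGroup.mkOfDetNeZero (A.map GaussianInt.toComplex) <| by
    rwa [← RingHom.mapMatrix_apply, ← RingHom.map_det, ne_eq, GaussianInt.toComplex_eq_zero]

noncomputable def gaussianClass (A : Matrix (Fin 2) (Fin 2) GaussianInt) (hA : A.det ≠ 0) :
    GL (Fin 2) ℂ ⧸ scalarSubgroup :=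
  gaussianToGL A hA

theorem gaussianClass_one (h : (1 : Matrix (Fin 2) (Fin 2) GaussianInt).det ≠ 0) :
    gaussianClass 1 h = 1 := by
  rw [gaussianClass, ← QuotientGroup.mk_one]
  congr 1
  ext : 1
  simp [gaussianToGL]

theorem gaussianClass_eq_iff (hA : A.det ≠ 0) (hB : B.det ≠ 0) :
    gaussianClass A hA = gaussianClass B hB ↔ A.IsProportional B :=
  mk_eq_mk_iff_isProportional.trans (Matrix.isProportional_map_iff GaussianInt.toComplex_injective)

theorem gaussianClass_mul_eq (hA : A.det ≠ 0) (hB : B.det ≠ 0) (hC : C.det ≠ 0)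
    (h : (A * B).IsProportional C) :
    gaussianClass A hA * gaussianClass B hB = gaussianClass C hC := by
  have hAB : (A * B).det ≠ 0 := by rw [det_mul]; exact mul_ne_zero hA hB
  rw [← (gaussianClass_eq_iff hAB hC).mpr h, gaussianClass, gaussianClass, gaussianClass,
    ← QuotientGroup.mk_mul]
  congr 1
  ext : 1
  simp [gaussianToGL, Matrix.map_mul]

end GaussianMatrices

local notation "𝐢" => (⟨0, 1⟩ : GaussianInt)

def gaussianS : Matrix (Fin 2) (Fin 2) GaussianInt := !![1, 0; 0, 𝐢]

def gaussianV : Matrix (Fin 2) (Fin 2) GaussianInt := !![1, -𝐢; -𝐢, 1]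

theorem gaussianS_det_ne_zero : gaussianS.det ≠ 0 := by decide

theorem gaussianV_det_ne_zero : gaussianV.det ≠ 0 := by decide

theorem mk_S_GL : (S_GL : GL (Fin 2) ℂ ⧸ scalarSubgroup) =
    gaussianClass gaussianS gaussianS_det_ne_zero := by
  rw [gaussianClass]
  congr 1
  ext i j
  fin_cases i <;> fin_cases j <;>
    simp [S_GL, Smat, gaussianToGL, gaussianS, GaussianInt.toComplex_def']

theorem conj_omega : starRingEnd ℂ ω = ω * -Complex.I := by
  have hω : ω * starRingEnd ℂ ω = 1 := by
    rw [Complex.mul_conj, Complex.normSq_eq_norm_sq, ω, Complex.norm_exp_ofReal_mul_I]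
    norm_num
  rw [← conj_omega_mul_conj_omega, ← mul_assoc, hω, one_mul]

theorem mk_V_GL : (V_GL : GL (Fin 2) ℂ ⧸ scalarSubgroup) =
    gaussianClass gaussianV gaussianV_det_ne_zero := by
  refine (mk_eq_mk_iff_exists_smul_eq.mpr ⟨(1 / (Real.sqrt 2 : ℂ)) * ω, ?_, ?_⟩).symm
  · have : (Real.sqrt 2 : ℂ) ≠ 0 := by exact_mod_cast (Real.sqrt_pos.mpr two_pos).ne'
    exact mul_ne_zero (one_div_ne_zero this) (Complex.exp_ne_zero _)
  · ext i j
    fin_cases i <;> fin_cases j <;>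
      simp [V_GL, Vmat, gaussianToGL, gaussianV, GaussianInt.toComplex_def', conj_omega,
        mul_assoc]

-- Listed breadth-first from the identity along right multiplication by `S` and `V`.
def cliffordRep : Fin 24 → Matrix (Fin 2) (Fin 2) GaussianInt :=
  ![!![1, 0; 0, 1], !![1, 0; 0, 𝐢], !![1, -𝐢; -𝐢, 1], !![1, 0; 0, -1],
    !![1, -𝐢; 1, 𝐢], !![1, 1; -𝐢, 𝐢], !![0, 1; 1, 0], !![1, 0; 0, -𝐢],
    !![1, -𝐢; 𝐢, -1], !![1, 1; 1, -1], !![0, 1; 𝐢, 0], !![1, 𝐢; -𝐢, -1],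
    !![0, 1; -𝐢, 0], !![1, 𝐢; 𝐢, 1], !![1, -𝐢; -1, -𝐢], !![1, 1; 𝐢, -𝐢],
    !![0, 1; -1, 0], !![1, 𝐢; 1, -𝐢], !![1, 𝐢; -1, 𝐢], !![1, -1; -𝐢, -𝐢],
    !![1, -1; 𝐢, 𝐢], !![1, 1; -1, 1], !![1, -1; 1, 1], !![1, -1; -1, -1]]

theorem cliffordRep_det_ne_zero : ∀ k, (cliffordRep k).det ≠ 0 := by decide

noncomputable def cliffordClass (k : Fin 24) : GL (Fin 2) ℂ ⧸ scalarSubgroup :=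
  gaussianClass (cliffordRep k) (cliffordRep_det_ne_zero k)

theorem cliffordClass_injective : Function.Injective cliffordClass := by
  have h : ∀ k l, (cliffordRep k).IsProportional (cliffordRep l) → k = l := by decide
  exact fun k l hkl => h k l ((gaussianClass_eq_iff _ _).mp hkl)

theorem cliffordClass_mul_S_mem_range (k : Fin 24) :
    cliffordClass k * gaussianClass gaussianS gaussianS_det_ne_zero ∈
      Set.range cliffordClass := by
  have h : ∀ k, ∃ j, (cliffordRep k * gaussianS).IsProportional (cliffordRep j) := by decide
  obtain ⟨j, hj⟩ := h k
  exact ⟨j, (gaussianClass_mul_eq _ _ _ hj).symm⟩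

theorem cliffordClass_mul_V_mem_range (k : Fin 24) :
    cliffordClass k * gaussianClass gaussianV gaussianV_det_ne_zero ∈
      Set.range cliffordClass := by
  have h : ∀ k, ∃ j, (cliffordRep k * gaussianV).IsProportional (cliffordRep j) := by decide
  obtain ⟨j, hj⟩ := h k
  exact ⟨j, (gaussianClass_mul_eq _ _ _ hj).symm⟩

theorem cliffordClass_eq_one_or_eq_mul (k : Fin 24) :
    cliffordClass k = 1 ∨ ∃ j < k, ∃ g ∈ ({gaussianClass gaussianS gaussianS_det_ne_zero,
      gaussianClass gaussianV gaussianV_det_ne_zero} : Set (GL (Fin 2) ℂ ⧸ scalarSubgroup)),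
      cliffordClass k = cliffordClass j * g := by
  have h : ∀ k, (cliffordRep k).IsProportional 1 ∨
      ∃ j < k, (cliffordRep j * gaussianS).IsProportional (cliffordRep k) ∨
        (cliffordRep j * gaussianV).IsProportional (cliffordRep k) := by decide
  obtain h1 | ⟨j, hjk, hS | hV⟩ := h k
  · left
    rw [cliffordClass, ← gaussianClass_one (by decide), gaussianClass_eq_iff]
    exact h1
  · exact .inr ⟨j, hjk, _, .inl rfl, (gaussianClass_mul_eq _ _ _ hS).symm⟩
  · exact .inr ⟨j, hjk, _, .inr rfl, (gaussianClass_mul_eq _ _ _ hV).symm⟩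

theorem coe_closure_eq_range_cliffordClass :
    (Subgroup.closure ({(QuotientGroup.mk S_GL : GL (Fin 2) ℂ ⧸ scalarSubgroup),
      QuotientGroup.mk V_GL} : Set (GL (Fin 2) ℂ ⧸ scalarSubgroup)) : Set _) =
      Set.range cliffordClass := by
  rw [mk_S_GL, mk_V_GL]
  refine (Subgroup.closure_subset_of_finite_of_mul_mem (Set.finite_range _) ?_ ?_).antisymm
    (Set.range_subset_iff.mpr
      (Subgroup.mem_closure_of_forall_eq_one_or_eq_mul _ cliffordClass_eq_one_or_eq_mul))
  · exact ⟨0, (cliffordClass_eq_one_or_eq_mul 0).resolve_right (by simp)⟩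
  · rintro _ ⟨k, rfl⟩ g (rfl | rfl)
    · exact cliffordClass_mul_S_mem_range k
    · exact cliffordClass_mul_V_mem_range k

/-- The reduced Clifford group `𝒞₁`, the subgroup of `GL(2,ℂ)/Z` generated by
the images of `S` and `V` under the quotient map, is finite of order 24. -/
theorem reduced_clifford_group_one_qubit_card :
    Finite (Subgroup.closure
        ({(QuotientGroup.mk S_GL : GL (Fin 2) ℂ ⧸ scalarSubgroup),
          QuotientGroup.mk V_GL} : Set (GL (Fin 2) ℂ ⧸ scalarSubgroup))) ∧
    Nat.card (Subgroup.closure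
        ({(QuotientGroup.mk S_GL : GL (Fin 2) ℂ ⧸ scalarSubgroup),
          QuotientGroup.mk V_GL} : Set (GL (Fin 2) ℂ ⧸ scalarSubgroup))) = 24 := by
  rw [← SetLike.coe_sort_coe, coe_closure_eq_range_cliffordClass]
  refine ⟨Set.finite_range _ |>.to_subtype, ?_⟩
  rw [Nat.card_range_of_injective cliffordClass_injective, Nat.card_fin]
end

section
/- Let V be a finite type, G a simple graph on V, O ⊆ V a set of vertices (the outputs), ≤ a partial order on V, and f a function defined on the vertices not in O with values in V, such that for every v ∉ O: (F1) v is adjacent to f(v) in G, (F2) v ≤ f(v) and v ≠ f(v), and (F3) for every vertex u adjacent to f(v) in G, v ≤ u. Then f is injective: if v, w ∉ O and f(v) = f(w) then v = w. -/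
theorem causal_flow_function_injective_general {V : Type*} [PartialOrder V]
    (G : SimpleGraph V) (O : Set V) (f : V → V)
    (hF1 : ∀ v ∉ O, G.Adj v (f v))
    (hF3 : ∀ v ∉ O, ∀ u, G.Adj u (f v) → v ≤ u) :
    ∀ v ∉ O, ∀ w ∉ O, f v = f w → v = w := by
  intro v hv w hw hfvw
  have hvw : v ≤ w := hF3 v hv w (hfvw ▸ hF1 w hw)
  have hwv : w ≤ v := hF3 w hw v (hfvw ▸ hF1 v hv)
  exact le_antisymm hvw hwv

/-- The flow function of a causal flow is injective (on vertices outside the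
output set `O`): this is the key fact underlying the disjointness of the
input-to-output flow paths of a circuit-like diagram. -/
theorem causal_flow_function_injective {V : Type*} [Fintype V] [PartialOrder V]
    (G : SimpleGraph V) (O : Set V) (f : V → V)
    (hF1 : ∀ v ∉ O, G.Adj v (f v))
    (hF2 : ∀ v ∉ O, v ≤ f v ∧ v ≠ f v)
    (hF3 : ∀ v ∉ O, ∀ u, G.Adj u (f v) → v ≤ u) :
    ∀ v ∉ O, ∀ w ∉ O, f v = f w → v = w :=
  causal_flow_function_injective_general G O f hF1 hF3
end
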